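/- arXiv:2212.13551 — 2 statements merged into one kernel-verified Lean document; each statement's English description precedes it below -/
import Mathlib

section
/- Let T be a positive integer and t a positive even integer. If x ∈ ℝ^{Tt} satisfies supp(x) ⊆ {1, …, ⌊Tt/2⌋}, then g_{T,t}(y − x) ≥ (31/64)·T·Σ_{i=t/2}^{t−1}(7/8)^{2i} ≥ T·(49/64)^{t/2}·(31/15)·(1 − (49/64)^{t/2}). -/
/-! Both `q_{T,t}` and every `v_y` (for `y ≥ 0`) are nonnegative, so it suffices to bound the
coordinates of `y - x` outside the support of `x`. These fill the last `t/2` blocks, where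
`(y - x)_i = y_i` and `v_y(y) = (31/64) y²`; block `q` has `T` coordinates equal to `(7/8)^q`,
and the resulting geometric sum `Σ_{i=k}^{2k-1} (49/64)^i` has a closed form. -/

/-- The `k`-th coordinate (1-indexed) of `x ∈ ℝ^d`, with out-of-range coordinates
(including the convention `x_0 = 0`) equal to `0`. -/
noncomputable def coord {d : ℕ} (x : EuclideanSpace ℝ (Fin d)) (k : ℕ) : ℝ :=
  if h : 1 ≤ k ∧ k ≤ d then x ⟨k - 1, by omega⟩ else 0

/-- The piecewise scalar component `v_y` of the hard instance. -/
noncomputable def vFun (y x : ℝ) : ℝ :=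
  if x ≤ 31 / 32 * y then x ^ 2 / 2
  else if x ≤ y then x ^ 2 / 2 - 16 * (x - 31 / 32 * y) ^ 2
  else if x ≤ 33 / 32 * y then x ^ 2 / 2 - y ^ 2 / 32 + 16 * (x - 33 / 32 * y) ^ 2
  else x ^ 2 / 2 - y ^ 2 / 32

/-- The quadratic (convex) part `q_{T,t}` of the hard instance, with the convention
`x_0 = 0` (encoded by `coord x 0 = 0`). -/
noncomputable def qFun (T t : ℕ) (x : EuclideanSpace ℝ (Fin (T * t))) : ℝ :=
  (1 / 2) * ∑ i ∈ Finset.range t,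
    ((7 / 8 * coord x (i * T) - coord x (i * T + 1)) ^ 2
      + ∑ j ∈ Finset.Icc 1 (T - 1), (coord x (i * T + j + 1) - coord x (i * T + j)) ^ 2)

/-- The reference vector `y ∈ ℝ^{Tt}` with `y_{qT+b} = (7/8)^q` for `b ∈ {1, …, T}`;
in 0-based indexing, `y i = (7/8)^(i / T)`. -/
noncomputable def yVec (T t : ℕ) : EuclideanSpace ℝ (Fin (T * t)) :=
  WithLp.toLp 2 (fun i => (7 / 8 : ℝ) ^ ((i : ℕ) / T))

/-- The hard instance `g_{T,t}(x) = q_{T,t}(x) + Σ_{i=1}^{Tt} v_{y_i}(x_i)`. -/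
noncomputable def gFun (T t : ℕ) (x : EuclideanSpace ℝ (Fin (T * t))) : ℝ :=
  qFun T t x + ∑ i : Fin (T * t), vFun (yVec T t i) (x i)

open Finset

lemma vFun_nonneg {y : ℝ} (hy : 0 ≤ y) (x : ℝ) : 0 ≤ vFun y x := by
  unfold vFun
  split_ifs <;>
    nlinarith [sq_nonneg x, sq_nonneg (x - 31 / 32 * y), sq_nonneg (x - 33 / 32 * y)]

lemma vFun_self {y : ℝ} (hy : 0 ≤ y) : vFun y y = 31 / 64 * y ^ 2 := by
  rcases hy.eq_or_lt with rfl | hy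
  · simp [vFun]
  · rw [vFun, if_neg (by linarith), if_pos le_rfl]
    ring

lemma qFun_nonneg (T t : ℕ) (x : EuclideanSpace ℝ (Fin (T * t))) : 0 ≤ qFun T t x := by
  unfold qFun
  positivity

lemma yVec_apply (T t : ℕ) (i : Fin (T * t)) : yVec T t i = (7 / 8 : ℝ) ^ ((i : ℕ) / T) := rfl

lemma sum_range_mul_comp_div {M : Type*} [AddCommMonoid M] (T t : ℕ) (f : ℕ → M) :
    ∑ i ∈ range (T * t), f (i / T) = T • ∑ q ∈ range t, f q := by
  rcases Nat.eq_zero_or_pos T with rfl | hT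
  · simp
  calc ∑ i ∈ range (T * t), f (i / T) = ∑ p ∈ range t ×ˢ range T, f p.1 := by
        refine sum_nbij' (fun i => (i / T, i % T)) (fun p => p.1 * T + p.2) ?_ ?_ ?_ ?_ ?_
        · intro i hi
          rw [mem_range] at hi
          rw [mem_product, mem_range, mem_range]
          exact ⟨Nat.div_lt_of_lt_mul hi, Nat.mod_lt i hT⟩
        · rintro ⟨q, r⟩ hqr
          rw [mem_product, mem_range, mem_range] at hqr
          rw [mem_range]
          nlinarith
        · intro i _
          exact Nat.div_add_mod' i T
        · rintro ⟨q, r⟩ hqr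
          rw [mem_product, mem_range, mem_range] at hqr
          rw [Prod.mk.injEq, Nat.add_comm, Nat.add_mul_div_right _ _ hT, Nat.add_mul_mod_self_right,
            Nat.div_eq_of_lt hqr.2, Nat.mod_eq_of_lt hqr.2, zero_add]
          exact ⟨rfl, rfl⟩
        · intro i _
          rfl
    _ = T • ∑ q ∈ range t, f q := by simp [sum_product, smul_sum]

lemma geom_sum_Ico_add_self {K : Type*} [Field K] {x : K} (hx : x ≠ 1) (k : ℕ) :
    ∑ i ∈ Ico k (k + k), x ^ i = x ^ k * (1 - x ^ k) / (1 - x) := by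
  rw [geom_sum_Ico' hx (Nat.le_add_right k k), pow_add]
  ring

noncomputable def vLowerBound (t q : ℕ) : ℝ :=
  if t / 2 ≤ q then 31 / 64 * (7 / 8 : ℝ) ^ (2 * q) else 0

lemma sum_range_vLowerBound (t : ℕ) :
    ∑ q ∈ range t, vLowerBound t q = 31 / 64 * ∑ q ∈ Ico (t / 2) t, (7 / 8 : ℝ) ^ (2 * q) := by
  have hfilter : (range t).filter (t / 2 ≤ ·) = Ico (t / 2) t := by
    ext q
    simp only [mem_filter, mem_range, mem_Ico]
    tauto
  rw [mul_sum, ← hfilter, sum_filter]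
  rfl

variable {T t : ℕ} {x : EuclideanSpace ℝ (Fin (T * t))}

lemma eq_zero_of_half_le_div (hte : Even t)
    (hsupp : ∀ i : Fin (T * t), x i ≠ 0 → (i : ℕ) + 1 ≤ T * t / 2) {i : Fin (T * t)}
    (hi : t / 2 ≤ (i : ℕ) / T) : x i = 0 := by
  by_contra hne
  have hlt := hsupp i hne
  have hge : t / 2 * T ≤ i := (Nat.mul_le_mul_right T hi).trans (Nat.div_mul_le_self i T)
  have hhalf : T * t / 2 = t / 2 * T := by rw [Nat.mul_div_assoc T hte.two_dvd, mul_comm]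
  omega

lemma vFun_yVec_sub_ge (hte : Even t)
    (hsupp : ∀ i : Fin (T * t), x i ≠ 0 → (i : ℕ) + 1 ≤ T * t / 2) (i : Fin (T * t)) :
    vLowerBound t ((i : ℕ) / T) ≤ vFun (yVec T t i) ((yVec T t - x) i) := by
  have hy : 0 ≤ yVec T t i := by rw [yVec_apply]; positivity
  unfold vLowerBound
  split_ifs with hi
  · rw [PiLp.sub_apply, eq_zero_of_half_le_div hte hsupp hi, sub_zero, vFun_self hy, yVec_apply,
      pow_mul']
  · exact vFun_nonneg hy _

theorem gFun_lower_bound_of_supp_general (T t : ℕ) (hte : Even t)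
    (x : EuclideanSpace ℝ (Fin (T * t)))
    (hsupp : ∀ i : Fin (T * t), x i ≠ 0 → (i : ℕ) + 1 ≤ T * t / 2) :
    gFun T t (yVec T t - x) ≥
      31 / 64 * (T : ℝ) * ∑ i ∈ Finset.Ico (t / 2) t, (7 / 8 : ℝ) ^ (2 * i) ∧
    31 / 64 * (T : ℝ) * ∑ i ∈ Finset.Ico (t / 2) t, (7 / 8 : ℝ) ^ (2 * i) ≥
      (T : ℝ) * (49 / 64 : ℝ) ^ (t / 2) * (31 / 15) * (1 - (49 / 64 : ℝ) ^ (t / 2)) := by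
  constructor
  · calc 31 / 64 * (T : ℝ) * ∑ i ∈ Ico (t / 2) t, (7 / 8 : ℝ) ^ (2 * i)
        = ∑ i : Fin (T * t), vLowerBound t ((i : ℕ) / T) := by
          rw [Fin.sum_univ_eq_sum_range (fun i => vLowerBound t (i / T)),
            sum_range_mul_comp_div, sum_range_vLowerBound, nsmul_eq_mul]
          ring
      _ ≤ ∑ i : Fin (T * t), vFun (yVec T t i) ((yVec T t - x) i) :=
          sum_le_sum fun i _ => vFun_yVec_sub_ge hte hsupp i
      _ ≤ gFun T t (yVec T t - x) := le_add_of_nonneg_left (qFun_nonneg _ _ _)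
  · obtain ⟨k, rfl⟩ := hte
    have hk : (k + k) / 2 = k := by omega
    have hsq : ∀ i : ℕ, (7 / 8 : ℝ) ^ (2 * i) = (49 / 64) ^ i := fun i => by
      rw [pow_mul]
      norm_num
    simp_rw [hk, hsq, geom_sum_Ico_add_self (by norm_num : (49 / 64 : ℝ) ≠ 1)]
    exact le_of_eq (by ring)

/-- If `t` is even and `supp x ⊆ {1, …, ⌊Tt/2⌋}`, then
`g_{T,t}(y - x) ≥ (31/64)·T·Σ_{i=t/2}^{t-1}(7/8)^{2i}
             ≥ T·(49/64)^{t/2}·(31/15)·(1 - (49/64)^{t/2})`. -/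
theorem gFun_lower_bound_of_supp (T t : ℕ) (hT : 0 < T) (ht : 0 < t) (hte : Even t)
    (x : EuclideanSpace ℝ (Fin (T * t)))
    (hsupp : ∀ i : Fin (T * t), x i ≠ 0 → (i : ℕ) + 1 ≤ T * t / 2) :
    gFun T t (yVec T t - x) ≥
      31 / 64 * (T : ℝ) * ∑ i ∈ Finset.Ico (t / 2) t, (7 / 8 : ℝ) ^ (2 * i) ∧
    31 / 64 * (T : ℝ) * ∑ i ∈ Finset.Ico (t / 2) t, (7 / 8 : ℝ) ^ (2 * i) ≥
      (T : ℝ) * (49 / 64 : ℝ) ^ (t / 2) * (31 / 15) * (1 - (49 / 64 : ℝ) ^ (t / 2)) :=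
  gFun_lower_bound_of_supp_general T t hte x hsupp
end

section
/- Fix positive integers T, t and x ∈ ℝ^{Tt}. For k ∈ {1, …, Tt}: if z̃_{k−1} < 5/7, z̃_k ∈ [31/32, 33/32], and z̃_{k+1} ≤ 33/32, then Dominate(k) holds. -/
/-- Extended coordinates: `x̃_0 = 0`, `x̃_i = x_i` for `1 ≤ i ≤ Tt`, `x̃_{Tt+1} = x_{Tt}`. -/
noncomputable def xTilde (T t : ℕ) (x : EuclideanSpace ℝ (Fin (T * t))) (k : ℕ) : ℝ :=
  if k ≤ T * t then coord x k else coord x (T * t)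

/-- Extended reference coordinates: `ỹ_0 = 1`, `ỹ_i = y_i` for `1 ≤ i ≤ Tt`,
`ỹ_{Tt+1} = y_{Tt}`. -/
noncomputable def yTilde (T t : ℕ) (k : ℕ) : ℝ :=
  if k = 0 then 1
  else if k ≤ T * t then coord (yVec T t) k
  else coord (yVec T t) (T * t)

/-- The ratios `z̃_k = x̃_k / ỹ_k`. -/
noncomputable def zTilde (T t : ℕ) (x : EuclideanSpace ℝ (Fin (T * t))) (k : ℕ) : ℝ :=
  xTilde T t x k / yTilde T t k

/-- `Dominate k` holds iff `x_k = 0` or `|(∇g_{T,t}(x))_k| > 0.19·|x_k|`. -/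
def Dominate (T t : ℕ) (x : EuclideanSpace ℝ (Fin (T * t))) (k : ℕ) : Prop :=
  coord x k = 0 ∨ |coord (gradient (gFun T t) x) k| > 0.19 * |coord x k|

/-!
At a coordinate entering the window `[31/32, 33/32] · y_k`, the `k`-th partial derivative of
`g_{T,t}` is the sum of a left edge term, a right edge term and `v'_{y_k}(x_k)`.
Since `z̃_{k-1} < 5/7`, the left edge contributes more than `x_k - (5/7) y_k`; since
`z̃_{k+1} ≤ 33/32` and the edge weight is at most `1`, the right edge contributes at least
`x_k - (33/32) y_k`; and on the window `v'_{y_k}(x_k)` is `31 (y_k - x_k)` or `33 (x_k - y_k)`.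
Adding up, the derivative exceeds `0.19 x_k > 0`.
-/

open Set

theorem hasDerivAt_ite_le {p q p' q' : ℝ → ℝ} {a : ℝ}
    (hp : ∀ s, HasDerivAt p (p' s) s) (hq : ∀ s, HasDerivAt q (q' s) s)
    (heq : p a = q a) (heq' : p' a = q' a) (s : ℝ) :
    HasDerivAt (fun u => if u ≤ a then p u else q u) (if s ≤ a then p' s else q' s) s := by
  rcases lt_trichotomy s a with hs | rfl | hs
  · rw [if_pos hs.le]
    refine (hp s).congr_of_eventuallyEq ?_
    filter_upwards [Iio_mem_nhds hs] with u hu using if_pos (le_of_lt hu)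
  · rw [if_pos le_rfl]
    have hleft : HasDerivWithinAt (fun u => if u ≤ s then p u else q u) (p' s) (Iic s) s :=
      (hp s).hasDerivWithinAt.congr (fun u hu => if_pos hu) (if_pos le_rfl)
    have hright : HasDerivWithinAt (fun u => if u ≤ s then p u else q u) (p' s) (Ici s) s := by
      rw [heq']
      refine (hq s).hasDerivWithinAt.congr (fun u hu => ?_) (by simp [heq])
      rcases (mem_Ici.mp hu).eq_or_lt with rfl | hlt
      · simp [heq]
      · exact if_neg (not_le.mpr hlt)
    simpa [Iic_union_Ici] using hleft.union hright
  · rw [if_neg (not_le.mpr hs)]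
    refine (hq s).congr_of_eventuallyEq ?_
    filter_upwards [Ioi_mem_nhds hs] with u hu using if_neg (not_le.mpr hu)

theorem hasDerivAt_half_sq_add_mul_sub_sq (α c γ s : ℝ) :
    HasDerivAt (fun u : ℝ => u ^ 2 / 2 + α * (u - c) ^ 2 + γ) (s + 2 * α * (s - c)) s := by
  have := (((hasDerivAt_pow 2 s).div_const 2).add
    ((((hasDerivAt_id' s).sub_const c).fun_pow 2).const_mul α)).add_const γ
  exact this.congr_deriv (by norm_num; ring)

theorem HasFDerivAt.gradient_apply {ι : Type*} [Fintype ι] [DecidableEq ι]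
    {f : EuclideanSpace ℝ ι → ℝ} {L : EuclideanSpace ℝ ι →L[ℝ] ℝ} {x : EuclideanSpace ℝ ι}
    (h : HasFDerivAt f L x) (i : ι) :
    gradient f x i = L (EuclideanSpace.single i 1) := by
  rw [← h.fderiv, ← inner_gradient_left, EuclideanSpace.inner_single_right]
  simp

theorem hasFDerivAt_half_sum_sq {E ι : Type*} [NormedAddCommGroup E] [NormedSpace ℝ E]
    (s : Finset ι) (ℓ : ι → E →L[ℝ] ℝ) (x : E) :
    HasFDerivAt (fun z => 1 / 2 * ∑ m ∈ s, ℓ m z ^ 2) (∑ m ∈ s, ℓ m x • ℓ m) x := by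
  have := (HasFDerivAt.fun_sum fun m (_ : m ∈ s) => (ℓ m).hasFDerivAt.pow 2 (x := x)).const_mul
    (1 / 2 : ℝ)
  refine this.congr_fderiv ?_
  rw [Finset.smul_sum]
  refine Finset.sum_congr rfl fun m _ => ?_
  rw [smul_smul]
  congr 1
  ring

theorem hasFDerivAt_sum_apply {ι : Type*} [Fintype ι] {φ : ι → ℝ → ℝ} {φ' : ι → ℝ}
    {x : EuclideanSpace ℝ ι} (hφ : ∀ i, HasDerivAt (φ i) (φ' i) (x i)) :
    HasFDerivAt (fun z : EuclideanSpace ℝ ι => ∑ i, φ i (z i))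
      (∑ i, φ' i • EuclideanSpace.proj (𝕜 := ℝ) i) x :=
  HasFDerivAt.fun_sum fun i _ => (hφ i).comp_hasFDerivAt x
    (EuclideanSpace.proj (𝕜 := ℝ) i).hasFDerivAt

theorem Finset.sum_range_mul_eq_sum_sum {M : Type*} [AddCommMonoid M] (f : ℕ → M) (T t : ℕ) :
    ∑ m ∈ range (T * t), f m = ∑ i ∈ range t, ∑ j ∈ range T, f (i * T + j) := by
  induction t with
  | zero => simp
  | succ n ih =>
    rw [Nat.mul_succ, sum_range_add, ih, sum_range_succ]
    simp only [Nat.mul_comm]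

theorem Finset.sum_range_eq_add_sum_Icc {M : Type*} [AddCommMonoid M] (f : ℕ → M) {n : ℕ}
    (hn : 0 < n) : ∑ j ∈ range n, f j = f 0 + ∑ j ∈ Icc 1 (n - 1), f j := by
  obtain ⟨n, rfl⟩ := Nat.exists_eq_add_of_lt hn
  rw [range_eq_Ico, sum_eq_sum_Ico_succ_bot (by omega)]
  simp [Finset.Ico_add_one_right_eq_Icc]

noncomputable def vDeriv (y x : ℝ) : ℝ :=
  if x ≤ 31 / 32 * y then x
  else if x ≤ y then x - 32 * (x - 31 / 32 * y)
  else if x ≤ 33 / 32 * y then x + 32 * (x - 33 / 32 * y)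
  else x

theorem hasDerivAt_vFun {y : ℝ} (hy : 0 ≤ y) (s : ℝ) : HasDerivAt (vFun y) (vDeriv y s) s := by
  have hP : ∀ s, HasDerivAt (fun u : ℝ => u ^ 2 / 2) s s := fun s => by
    simpa using hasDerivAt_half_sq_add_mul_sub_sq 0 0 0 s
  have hQ : ∀ s, HasDerivAt (fun u : ℝ => u ^ 2 / 2 - 16 * (u - 31 / 32 * y) ^ 2)
      (s - 32 * (s - 31 / 32 * y)) s := fun s => by
    convert hasDerivAt_half_sq_add_mul_sub_sq (-16) (31 / 32 * y) 0 s using 1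
    · ext u; ring
    · ring
  have hR : ∀ s, HasDerivAt (fun u : ℝ => u ^ 2 / 2 - y ^ 2 / 32 + 16 * (u - 33 / 32 * y) ^ 2)
      (s + 32 * (s - 33 / 32 * y)) s := fun s => by
    convert hasDerivAt_half_sq_add_mul_sub_sq 16 (33 / 32 * y) (-(y ^ 2 / 32)) s using 1
    · ext u; ring
    · ring
  have hS : ∀ s, HasDerivAt (fun u : ℝ => u ^ 2 / 2 - y ^ 2 / 32) s s := fun s => by
    simpa [sub_eq_add_neg] using hasDerivAt_half_sq_add_mul_sub_sq 0 0 (-(y ^ 2 / 32)) s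
  have h3 := hasDerivAt_ite_le hR hS (a := 33 / 32 * y) (by ring) (by ring)
  have h2 := hasDerivAt_ite_le hQ h3 (a := y)
    (by rw [if_pos (by linarith)]; ring) (by rw [if_pos (by linarith)]; ring)
  exact hasDerivAt_ite_le hP h2 (a := 31 / 32 * y)
    (by rw [if_pos (by linarith)]; ring) (by rw [if_pos (by linarith)]; ring) s

theorem lt_sub_add_vDeriv {Y x l r : ℝ} (hY : 0 < Y) (hx1 : 31 / 32 * Y ≤ x)
    (hx2 : x ≤ 33 / 32 * Y) (hl : l < 5 / 7 * Y) (hr : x - 33 / 32 * Y ≤ r) :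
    19 / 100 * x < r - (l - x) + vDeriv Y x := by
  unfold vDeriv
  split_ifs <;> linarith

@[simp]
theorem coord_zero {d : ℕ} (x : EuclideanSpace ℝ (Fin d)) : coord x 0 = 0 :=
  dif_neg (by omega)

theorem coord_succ {d : ℕ} (x : EuclideanSpace ℝ (Fin d)) (j : Fin d) : coord x (j + 1) = x j :=
  dif_pos ⟨by omega, j.isLt⟩

theorem coord_single {d : ℕ} (m : ℕ) (j : Fin d) :
    coord (EuclideanSpace.single j 1) m = if m = j + 1 then 1 else 0 := by
  unfold coord
  split_ifs with h hm hm <;> simp [Fin.ext_iff] <;> omega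

noncomputable def coordCLM (d m : ℕ) : EuclideanSpace ℝ (Fin d) →L[ℝ] ℝ :=
  if h : 1 ≤ m ∧ m ≤ d then EuclideanSpace.proj (⟨m - 1, by omega⟩ : Fin d) else 0

@[simp]
theorem coordCLM_apply {d : ℕ} (m : ℕ) (x : EuclideanSpace ℝ (Fin d)) :
    coordCLM d m x = coord x m := by
  unfold coord coordCLM
  split_ifs <;> rfl

noncomputable def aCoef (T m : ℕ) : ℝ := if T ∣ m then 7 / 8 else 1

theorem aCoef_pos (T m : ℕ) : 0 < aCoef T m := by
  unfold aCoef; split_ifs <;> norm_num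

theorem aCoef_le_one (T m : ℕ) : aCoef T m ≤ 1 := by
  unfold aCoef; split_ifs <;> norm_num

noncomputable def edgeCLM (T t m : ℕ) : EuclideanSpace ℝ (Fin (T * t)) →L[ℝ] ℝ :=
  aCoef T m • coordCLM (T * t) m - coordCLM (T * t) (m + 1)

@[simp]
theorem edgeCLM_apply (T t m : ℕ) (x : EuclideanSpace ℝ (Fin (T * t))) :
    edgeCLM T t m x = aCoef T m * coord x m - coord x (m + 1) := by
  simp [edgeCLM]

theorem qFun_eq_half_sum_sq {T : ℕ} (hT : 0 < T) (t : ℕ) (x : EuclideanSpace ℝ (Fin (T * t))) :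
    qFun T t x = 1 / 2 * ∑ m ∈ Finset.range (T * t), edgeCLM T t m x ^ 2 := by
  rw [qFun, Finset.sum_range_mul_eq_sum_sum]
  congr 1
  refine Finset.sum_congr rfl fun i _ => ?_
  rw [Finset.sum_range_eq_add_sum_Icc _ hT]
  have hblock : aCoef T (i * T) = 7 / 8 := if_pos (Dvd.intro_left i rfl)
  have hinner : ∀ j ∈ Finset.Icc 1 (T - 1), aCoef T (i * T + j) = 1 := fun j hj => by
    obtain ⟨hj1, hj2⟩ := Finset.mem_Icc.mp hj
    refine if_neg fun hdvd => ?_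
    have := Nat.le_of_dvd hj1 ((Nat.dvd_add_right (Dvd.intro_left i rfl)).mp hdvd)
    omega
  simp only [edgeCLM_apply, add_zero, hblock]
  congr 1
  refine Finset.sum_congr rfl fun j hj => ?_
  rw [hinner j hj]
  ring

theorem yVec_pos (T t : ℕ) (i : Fin (T * t)) : 0 < yVec T t i := by
  simp only [yVec, PiLp.toLp_apply]
  positivity

theorem hasFDerivAt_gFun {T : ℕ} (hT : 0 < T) (t : ℕ) (x : EuclideanSpace ℝ (Fin (T * t))) :
    HasFDerivAt (gFun T t)
      (∑ m ∈ Finset.range (T * t), edgeCLM T t m x • edgeCLM T t m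
        + ∑ i, vDeriv (yVec T t i) (x i) • EuclideanSpace.proj (𝕜 := ℝ) i) x := by
  have hg : gFun T t = fun z => 1 / 2 * ∑ m ∈ Finset.range (T * t), edgeCLM T t m z ^ 2
      + ∑ i, vFun (yVec T t i) (z i) :=
    funext fun z => by rw [gFun, qFun_eq_half_sum_sq hT]
  rw [hg]
  exact (hasFDerivAt_half_sum_sq _ _ x).add
    (hasFDerivAt_sum_apply fun i => hasDerivAt_vFun (yVec_pos T t i).le (x i))

theorem coord_gradient_gFun {T t k : ℕ} (hT : 0 < T) (x : EuclideanSpace ℝ (Fin (T * t)))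
    (hk1 : 1 ≤ k) (hk2 : k ≤ T * t) :
    coord (gradient (gFun T t) x) k =
      (if k < T * t then aCoef T k * (aCoef T k * coord x k - coord x (k + 1)) else 0)
        - (aCoef T (k - 1) * coord x (k - 1) - coord x k)
        + vDeriv (coord (yVec T t) k) (coord x k) := by
  obtain ⟨j, rfl⟩ : ∃ j : Fin (T * t), k = j + 1 := ⟨⟨k - 1, by omega⟩, by simp; omega⟩
  simp only [coord_succ, (hasFDerivAt_gFun hT t x).gradient_apply]
  simp [edgeCLM, coord_single, coord_succ, mul_sub, Finset.sum_sub_distrib, mul_ite,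
    Finset.sum_ite_eq']
  split_ifs <;> ring

theorem coord_yVec {T t m : ℕ} (h1 : 1 ≤ m) (h2 : m ≤ T * t) :
    coord (yVec T t) m = (7 / 8 : ℝ) ^ ((m - 1) / T) :=
  dif_pos ⟨h1, h2⟩

theorem coord_yVec_pos {T t m : ℕ} (h1 : 1 ≤ m) (h2 : m ≤ T * t) : 0 < coord (yVec T t) m := by
  rw [coord_yVec h1 h2]
  positivity

theorem aCoef_mul_coord_yVec {T t m : ℕ} (h1 : 1 ≤ m) (h2 : m < T * t) :
    aCoef T m * coord (yVec T t) m = coord (yVec T t) (m + 1) := by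
  obtain ⟨n, rfl⟩ := Nat.exists_eq_add_of_le' h1
  rw [coord_yVec h1 h2.le, coord_yVec (m := n + 1 + 1) (by omega) h2, Nat.add_sub_cancel,
    Nat.add_sub_cancel, Nat.succ_div, aCoef]
  split_ifs <;> simp [pow_succ, mul_comm]

theorem zTilde_eq {T t m : ℕ} (x : EuclideanSpace ℝ (Fin (T * t))) (h1 : 1 ≤ m) (h2 : m ≤ T * t) :
    zTilde T t x m = coord x m / coord (yVec T t) m := by
  rw [zTilde, xTilde, yTilde, if_pos h2, if_neg (by omega), if_pos h2]

theorem aCoef_mul_coord_pred_lt {T t k : ℕ} {x : EuclideanSpace ℝ (Fin (T * t))} {c : ℝ}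
    (hc : 0 < c) (hk1 : 1 ≤ k) (hk2 : k ≤ T * t) (h : zTilde T t x (k - 1) < c) :
    aCoef T (k - 1) * coord x (k - 1) < c * coord (yVec T t) k := by
  rcases hk1.eq_or_lt with rfl | hk1
  · simpa using mul_pos hc (coord_yVec_pos le_rfl hk2)
  · obtain ⟨m, rfl⟩ : ∃ m, k = m + 1 + 1 := ⟨k - 2, by omega⟩
    have hY := coord_yVec_pos (T := T) (t := t) (m := m + 1) (by omega) (by omega)
    rw [Nat.add_sub_cancel, zTilde_eq x (by omega) (by omega), div_lt_iff₀ hY] at h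
    rw [Nat.add_sub_cancel, ← aCoef_mul_coord_yVec (by omega) (by omega)]
    nlinarith [aCoef_pos T (m + 1)]

theorem sub_le_of_zTilde_succ_le {T t k : ℕ} {x : EuclideanSpace ℝ (Fin (T * t))} {c : ℝ}
    (hk1 : 1 ≤ k) (hx : coord x k ≤ c * coord (yVec T t) k)
    (h : zTilde T t x (k + 1) ≤ c) :
    coord x k - c * coord (yVec T t) k ≤
      if k < T * t then aCoef T k * (aCoef T k * coord x k - coord x (k + 1)) else 0 := by
  split_ifs with hk
  · have hY := coord_yVec_pos (T := T) (t := t) (m := k + 1) (by omega) hk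
    rw [zTilde_eq x (by omega) hk, div_le_iff₀ hY, ← aCoef_mul_coord_yVec hk1 hk] at h
    have ha := aCoef_pos T k
    have ha1 := aCoef_le_one T k
    nlinarith [mul_le_mul_of_nonneg_left h ha.le,
      mul_nonneg (by nlinarith : 0 ≤ 1 - aCoef T k * aCoef T k) (sub_nonneg.2 hx)]
  · linarith

theorem dominate_of_entering_general (T t : ℕ) (hT : 0 < T)
    (x : EuclideanSpace ℝ (Fin (T * t))) (k : ℕ) (hk1 : 1 ≤ k) (hk2 : k ≤ T * t)
    (h1 : zTilde T t x (k - 1) < 5 / 7)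
    (h2 : zTilde T t x k ∈ Set.Icc (31 / 32 : ℝ) (33 / 32))
    (h3 : zTilde T t x (k + 1) ≤ 33 / 32) :
    Dominate T t x k := by
  have hY := coord_yVec_pos (T := T) (t := t) hk1 hk2
  rw [zTilde_eq x hk1 hk2, Set.mem_Icc, le_div_iff₀ hY, div_le_iff₀ hY] at h2
  have hgrad : 19 / 100 * coord x k < coord (gradient (gFun T t) x) k := by
    rw [coord_gradient_gFun hT x hk1 hk2]
    exact lt_sub_add_vDeriv hY h2.1 h2.2 (aCoef_mul_coord_pred_lt (by norm_num) hk1 hk2 h1)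
      (sub_le_of_zTilde_succ_le hk1 h2.2 h3)
  have hx : 0 < coord x k := by linarith
  right
  rw [abs_of_pos hx, abs_of_pos (by linarith)]
  norm_num [hgrad]

/-- For `k ∈ {1, …, Tt}`: if `z̃_{k-1} < 5/7`,
`z̃_k ∈ [31/32, 33/32]` and `z̃_{k+1} ≤ 33/32`, then `Dominate k` holds. -/
theorem dominate_of_entering (T t : ℕ) (hT : 0 < T) (ht : 0 < t)
    (x : EuclideanSpace ℝ (Fin (T * t))) (k : ℕ) (hk1 : 1 ≤ k) (hk2 : k ≤ T * t)
    (h1 : zTilde T t x (k - 1) < 5 / 7)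
    (h2 : zTilde T t x k ∈ Set.Icc (31 / 32 : ℝ) (33 / 32))
    (h3 : zTilde T t x (k + 1) ≤ 33 / 32) :
    Dominate T t x k :=
  dominate_of_entering_general T t hT x k hk1 hk2 h1 h2 h3
end
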